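/- The number of ascent sequences of length n avoiding the pattern 011 is 2^{n−1} for n ≥ 1. -/

import Mathlib

open Filter Topology

/-- Number of ascents in a sequence (list) of naturals. -/
def asc (s : List ℕ) : ℕ :=
  ((s.zip s.tail).filter (fun p => p.1 < p.2)).length

/-- `s` is an ascent sequence: first entry `0`, and each later entry is at most
one more than the number of ascents of the preceding prefix. -/
def IsAscentSeq (s : List ℕ) : Prop :=
  (0 < s.length → s.getD 0 0 = 0) ∧
  ∀ i, 0 < i → i < s.length → s.getD i 0 ≤ asc (s.take i) + 1

/-- `s` is a weak ascent sequence: every entry is at most the number of ascents. -/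
def IsWeakAscentSeq (s : List ℕ) : Prop :=
  ∀ x ∈ s, x ≤ asc s

/-- `s` contains the pattern `p`: some subsequence of `s` is order-isomorphic
(including equalities) to `p`. -/
def ContainsPattern (s p : List ℕ) : Prop :=
  ∃ idx : Fin p.length → ℕ, StrictMono idx ∧ (∀ a, idx a < s.length) ∧
    ∀ a b : Fin p.length, p.get a < p.get b ↔ s.getD (idx a) 0 < s.getD (idx b) 0

def AvoidsPattern (s p : List ℕ) : Prop := ¬ ContainsPattern s p

/-- A pattern of length `j` is a permutation of `0,…,j-1`. -/
def IsPattern (p : List ℕ) : Prop := List.Perm p (List.range p.length)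

/-- Sum-indecomposable: no proper prefix whose entries are all smaller than
all entries of the complementary suffix. -/
def SumIndecomposable (p : List ℕ) : Prop :=
  ¬ ∃ i, 0 < i ∧ i < p.length ∧ ∀ x ∈ p.take i, ∀ y ∈ p.drop i, x < y

/-- Number of `p`-avoiding ascent sequences of length `k`. -/
noncomputable def ascentAvoidCount (p : List ℕ) (k : ℕ) : ℕ :=
  {s : List ℕ | s.length = k ∧ IsAscentSeq s ∧ AvoidsPattern s p}.ncard

/-- Number of `p`-avoiding weak ascent sequences of length `k`. -/
noncomputable def weakAvoidCount (p : List ℕ) (k : ℕ) : ℕ :=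
  {s : List ℕ | s.length = k ∧ IsWeakAscentSeq s ∧ AvoidsPattern s p}.ncard

def listMax (s : List ℕ) : ℕ := s.foldr max 0
def listMin (s : List ℕ) : ℕ := s.foldr min (listMax s)

/-- Reverse-complement map: `m j = max + min - n (k+1-j)`. -/
def revComp (s : List ℕ) : List ℕ :=
  s.reverse.map (fun x => listMax s + listMin s - x)

/-- Occurrence of pattern 000: three equal entries. -/
def Contains000 (s : List ℕ) : Prop :=
  ∃ a b c, a < b ∧ b < c ∧ c < s.length ∧
    s.getD a 0 = s.getD b 0 ∧ s.getD b 0 = s.getD c 0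

/-- Occurrence of pattern 100: `n i₁ > n i₂ = n i₃`. -/
def Contains100 (s : List ℕ) : Prop :=
  ∃ a b c, a < b ∧ b < c ∧ c < s.length ∧
    s.getD b 0 < s.getD a 0 ∧ s.getD b 0 = s.getD c 0

/-- Occurrence of pattern 110: `n i₁ = n i₂ > n i₃`. -/
def Contains110 (s : List ℕ) : Prop :=
  ∃ a b c, a < b ∧ b < c ∧ c < s.length ∧
    s.getD a 0 = s.getD b 0 ∧ s.getD c 0 < s.getD b 0

/-- Occurrence of pattern 120: `n i₂ > n i₁ > n i₃`. -/
def Contains120 (s : List ℕ) : Prop :=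
  ∃ a b c, a < b ∧ b < c ∧ c < s.length ∧
    s.getD a 0 < s.getD b 0 ∧ s.getD c 0 < s.getD a 0

/-- Occurrence of pattern 201: `n i₁ > n i₃ > n i₂`. -/
def Contains201 (s : List ℕ) : Prop :=
  ∃ a b c, a < b ∧ b < c ∧ c < s.length ∧
    s.getD c 0 < s.getD a 0 ∧ s.getD b 0 < s.getD c 0

/-- Occurrence of pattern 012: `n i₁ < n i₂ < n i₃`. -/
def Contains012 (s : List ℕ) : Prop :=
  ∃ a b c, a < b ∧ b < c ∧ c < s.length ∧
    s.getD a 0 < s.getD b 0 ∧ s.getD b 0 < s.getD c 0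

/-- Occurrence of pattern 011: `n i₁ < n i₂ = n i₃`. -/
def Contains011 (s : List ℕ) : Prop :=
  ∃ a b c, a < b ∧ b < c ∧ c < s.length ∧
    s.getD a 0 < s.getD b 0 ∧ s.getD b 0 = s.getD c 0

/-- Occurrence of pattern 021: `n i₁ < n i₃ < n i₂`. -/
def Contains021 (s : List ℕ) : Prop :=
  ∃ a b c, a < b ∧ b < c ∧ c < s.length ∧
    s.getD a 0 < s.getD c 0 ∧ s.getD c 0 < s.getD b 0

/-- Occurrence of pattern 102: `n i₂ < n i₁ < n i₃`. -/
def Contains102 (s : List ℕ) : Prop :=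
  ∃ a b c, a < b ∧ b < c ∧ c < s.length ∧
    s.getD b 0 < s.getD a 0 ∧ s.getD a 0 < s.getD c 0

/-- The construction `C = 0101⋯01 W̃₁⋯W̃ₖ` from weak ascent sequences. -/
def buildC (k : ℕ) (W : Fin k → List ℕ) : List ℕ :=
  (List.replicate k ([0,1] : List ℕ)).flatten ++
    (List.ofFn (fun h : Fin k =>
      (W h).map (fun x =>
        x + 1 + ∑ j ∈ Finset.univ.filter (fun j => j < h), listMax (W j)))).flatten

/-!
A positive entry of an ascent sequence cannot be repeated without forming a 011 together with
the initial `0`. Hence, inductively, a 011-avoiding ascent sequence with maximum `m` has exactly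
`m` ascents and contains every value `1, …, m`; its only admissible extensions are by `0` and by
`m + 1`, both of which preserve this invariant, so the count doubles with each step in length.
-/

lemma asc_cons_cons (a b : ℕ) (t : List ℕ) :
    asc (a :: b :: t) = (if a < b then 1 else 0) + asc (b :: t) := by
  by_cases h : a < b <;> simp [asc, h, Nat.add_comm]

lemma asc_append_singleton : ∀ {s : List ℕ} (hs : s ≠ []) (x : ℕ),
    asc (s ++ [x]) = asc s + if s.getLast hs < x then 1 else 0
  | [a], _, x => by by_cases h : a < x <;> simp [asc, h]
  | a :: b :: t, _, x => by
    rw [List.cons_append, List.cons_append, asc_cons_cons, ← List.cons_append,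
      asc_append_singleton (List.cons_ne_nil b t), asc_cons_cons, List.getLast_cons_cons]
    omega

lemma le_listMax {s : List ℕ} {x : ℕ} (h : x ∈ s) : x ≤ listMax s :=
  List.le_max_of_le' 0 h le_rfl

lemma listMax_append_singleton (s : List ℕ) (x : ℕ) :
    listMax (s ++ [x]) = max (listMax s) x := by
  induction s with
  | nil => simp [listMax]
  | cons a t ih => simp only [listMax, List.foldr_cons, List.cons_append] at *; omega

lemma getD_append_singleton_length (s : List ℕ) (x : ℕ) : (s ++ [x]).getD s.length 0 = x := by
  simp

lemma isAscentSeq_append_singleton {s : List ℕ} (hs : s ≠ []) (x : ℕ) :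
    IsAscentSeq (s ++ [x]) ↔ IsAscentSeq s ∧ x ≤ asc s + 1 := by
  have hlen : 0 < s.length := List.length_pos_iff.2 hs
  constructor
  · rintro ⟨h0, h1⟩
    refine ⟨⟨fun _ => ?_, fun i hi hilen => ?_⟩, ?_⟩
    · rw [← List.getD_append s [x] 0 0 hlen]; exact h0 (by simp)
    · have := h1 i hi (by simp; omega)
      rwa [List.getD_append _ _ _ _ hilen, List.take_append_of_le_length hilen.le] at this
    · simpa [getD_append_singleton_length] using h1 s.length hlen (by simp)
  · rintro ⟨⟨h0, h1⟩, hx⟩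
    refine ⟨fun _ => (List.getD_append s [x] 0 0 hlen).trans (h0 hlen), fun i hi hilen => ?_⟩
    rw [List.length_append, List.length_singleton, Nat.lt_succ_iff] at hilen
    rcases hilen.lt_or_eq with hilt | rfl
    · rw [List.getD_append _ _ _ _ hilt, List.take_append_of_le_length hilt.le]
      exact h1 i hi hilt
    · simpa [getD_append_singleton_length] using hx

lemma contains011_append_singleton {s : List ℕ} {x : ℕ} :
    Contains011 (s ++ [x]) ↔ Contains011 s ∨
      ∃ a b, a < b ∧ b < s.length ∧ s.getD a 0 < s.getD b 0 ∧ s.getD b 0 = x := by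
  constructor
  · rintro ⟨a, b, c, hab, hbc, hc, h1, h2⟩
    rw [List.length_append, List.length_singleton, Nat.lt_succ_iff] at hc
    rw [List.getD_append _ _ _ _ (by omega), List.getD_append _ _ _ _ (by omega)] at h1
    rw [List.getD_append _ _ _ _ (by omega)] at h2
    rcases hc.lt_or_eq with hc | rfl
    · rw [List.getD_append _ _ _ _ hc] at h2
      exact Or.inl ⟨a, b, c, hab, hbc, hc, h1, h2⟩
    · rw [getD_append_singleton_length] at h2
      exact Or.inr ⟨a, b, hab, hbc, h1, h2⟩
  · rintro (⟨a, b, c, hab, hbc, hc, h1, h2⟩ | ⟨a, b, hab, hb, h1, h2⟩)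
    · refine ⟨a, b, c, hab, hbc, by simp; omega, ?_⟩
      simp only [List.getD_append _ _ _ _ (show a < s.length by omega),
        List.getD_append _ _ _ _ (show b < s.length by omega), List.getD_append _ _ _ _ hc]
      exact ⟨h1, h2⟩
    · refine ⟨a, b, s.length, hab, hb, by simp, ?_⟩
      simp only [List.getD_append _ _ _ _ (show a < s.length by omega),
        List.getD_append _ _ _ _ hb, getD_append_singleton_length]
      exact ⟨h1, h2⟩

/-- The invariant of 011-avoiding ascent sequences: every ascent climbs to a new maximum and no
positive value below the maximum is skipped. -/
def IsSaturated (s : List ℕ) : Prop :=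
  asc s = listMax s ∧ ∀ v, 0 < v → v ≤ listMax s → v ∈ s

lemma IsSaturated.append_zero {s : List ℕ} (hs : s ≠ []) (h : IsSaturated s) :
    IsSaturated (s ++ [0]) := by
  constructor
  · rw [asc_append_singleton hs, listMax_append_singleton, if_neg (Nat.not_lt_zero _), h.1]
    omega
  · intro v hv hvle
    rw [listMax_append_singleton] at hvle
    exact List.mem_append_left _ (h.2 v hv (by omega))

lemma IsSaturated.append_listMax_succ {s : List ℕ} (hs : s ≠ []) (h : IsSaturated s) :
    IsSaturated (s ++ [listMax s + 1]) := by
  have hlast := le_listMax (List.getLast_mem hs)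
  constructor
  · rw [asc_append_singleton hs, listMax_append_singleton, if_pos (by omega), h.1]
    omega
  · intro v hv hvle
    rw [listMax_append_singleton] at hvle
    rcases Nat.lt_or_ge v (listMax s + 1) with hlt | hge
    · exact List.mem_append_left _ (h.2 v hv (by omega))
    · exact List.mem_append_right _ (by simp; omega)

lemma contains011_append_of_mem {s : List ℕ} {x : ℕ} (hs : IsAscentSeq s) (hx : 0 < x)
    (hmem : x ∈ s) : Contains011 (s ++ [x]) := by
  obtain ⟨j, hj, rfl⟩ := List.mem_iff_getElem.1 hmem
  have h0 : s.getD 0 0 = 0 := hs.1 (by omega)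
  have hj0 : j ≠ 0 := by
    rintro rfl
    rw [List.getD_eq_getElem _ _ hj] at h0
    omega
  refine contains011_append_singleton.2 (Or.inr ⟨0, j, by omega, hj, ?_, ?_⟩) <;>
    rw [List.getD_eq_getElem _ _ hj]
  · rwa [h0]

lemma append_singleton_avoiding_iff {s : List ℕ} {x : ℕ} (hne : s ≠ [])
    (hs : IsAscentSeq s) (havoid : ¬ Contains011 s) (hsat : IsSaturated s) :
    IsAscentSeq (s ++ [x]) ∧ ¬ Contains011 (s ++ [x]) ↔ x = 0 ∨ x = listMax s + 1 := by
  rw [isAscentSeq_append_singleton hne, contains011_append_singleton, hsat.1]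
  constructor
  · rintro ⟨⟨-, hx⟩, hnew⟩
    by_contra! hx'
    exact hnew (contains011_append_singleton.1
      (contains011_append_of_mem hs (by omega) (hsat.2 x (by omega) (by omega))))
  · rintro (rfl | rfl)
    · refine ⟨⟨hs, by omega⟩, ?_⟩
      rintro (h | ⟨a, b, -, -, h, hb⟩)
      · exact havoid h
      · omega
    · refine ⟨⟨hs, le_rfl⟩, ?_⟩
      rintro (h | ⟨a, b, -, hb, -, hbx⟩)
      · exact havoid h
      · rw [List.getD_eq_getElem _ _ hb] at hbx
        have := le_listMax (List.getElem_mem hb)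
        omega

def avoiders011 (n : ℕ) : Set (List ℕ) :=
  {s | s.length = n ∧ IsAscentSeq s ∧ ¬ Contains011 s}

lemma avoiders011_one : avoiders011 1 = {[0]} := by
  ext s
  constructor
  · rintro ⟨hlen, hasc, -⟩
    obtain ⟨a, rfl⟩ := List.length_eq_one_iff.1 hlen
    simpa using hasc.1
  · rintro rfl
    refine ⟨rfl, ⟨fun _ => rfl, fun i hi hlen => by simp at hlen; omega⟩, ?_⟩
    rintro ⟨a, b, c, hab, hbc, hc, -⟩
    simp at hc
    omega

lemma avoiders011_succ_succ (n : ℕ) (hsat : ∀ s ∈ avoiders011 (n + 1), IsSaturated s) :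
    avoiders011 (n + 2) = (· ++ [0]) '' avoiders011 (n + 1) ∪
      (fun s => s ++ [listMax s + 1]) '' avoiders011 (n + 1) := by
  ext s
  constructor
  · rintro ⟨hlen, hasc, havoid⟩
    obtain ⟨t, x, rfl⟩ := (List.eq_nil_or_concat' s).resolve_left (by rintro rfl; simp at hlen)
    have htlen : t.length = n + 1 := by simpa using hlen
    have hne : t ≠ [] := List.ne_nil_of_length_eq_add_one htlen
    have ht : t ∈ avoiders011 (n + 1) :=
      ⟨htlen, ((isAscentSeq_append_singleton hne x).1 hasc).1,
        fun h => havoid (contains011_append_singleton.2 (Or.inl h))⟩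
    rcases (append_singleton_avoiding_iff hne ht.2.1 ht.2.2 (hsat t ht)).1 ⟨hasc, havoid⟩
      with rfl | rfl
    · exact Or.inl ⟨t, ht, rfl⟩
    · exact Or.inr ⟨t, ht, rfl⟩
  · rintro (⟨t, ht, rfl⟩ | ⟨t, ht, rfl⟩) <;>
    · have hne : t ≠ [] := List.ne_nil_of_length_eq_add_one ht.1
      exact ⟨by simp [ht.1],
        (append_singleton_avoiding_iff hne ht.2.1 ht.2.2 (hsat t ht)).2 (by simp)⟩

lemma isSaturated_of_mem_avoiders011 (n : ℕ) {s : List ℕ} (hs : s ∈ avoiders011 (n + 1)) :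
    IsSaturated s := by
  induction n generalizing s with
  | zero =>
    rw [avoiders011_one, Set.mem_singleton_iff] at hs
    subst hs
    refine ⟨rfl, fun v hv hvle => ?_⟩
    simp [listMax] at hvle
    omega
  | succ n ih =>
    rw [avoiders011_succ_succ n fun t ht => ih ht] at hs
    rcases hs with ⟨t, ht, rfl⟩ | ⟨t, ht, rfl⟩
    · exact (ih ht).append_zero (List.ne_nil_of_length_eq_add_one ht.1)
    · exact (ih ht).append_listMax_succ (List.ne_nil_of_length_eq_add_one ht.1)

lemma encard_avoiders011 (n : ℕ) : (avoiders011 (n + 1)).encard = 2 ^ n := by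
  induction n with
  | zero => simp [avoiders011_one]
  | succ n ih =>
    have hdisj : Disjoint ((· ++ [0]) '' avoiders011 (n + 1))
        ((fun s => s ++ [listMax s + 1]) '' avoiders011 (n + 1)) := by
      rw [Set.disjoint_left]
      rintro _ ⟨s, -, rfl⟩ ⟨t, -, heq⟩
      simpa using (List.append_inj' heq rfl).2
    rw [avoiders011_succ_succ n fun s => isSaturated_of_mem_avoiders011 n,
      Set.encard_union_eq hdisj,
      Set.InjOn.encard_image (f := (· ++ [0])) fun _ _ _ _ h => (List.append_inj' h rfl).1,
      Set.InjOn.encard_image (f := fun s => s ++ [listMax s + 1])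
        fun _ _ _ _ h => (List.append_inj' h rfl).1, ih, pow_succ, mul_two]

/-- The number of 011-avoiding ascent sequences of length `n` is `2^(n-1)`. -/
theorem stmt12 (n : ℕ) (hn : 1 ≤ n) :
    {s : List ℕ | s.length = n ∧ IsAscentSeq s ∧ ¬ Contains011 s}.ncard =
      2 ^ (n - 1) := by
  obtain ⟨m, rfl⟩ := Nat.exists_eq_add_of_le' hn
  rw [Set.ncard_def]
  change (avoiders011 (m + 1)).encard.toNat = _
  rw [encard_avoiders011]
  simp
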